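/- arXiv:2312.05617 — 6 statements merged into one kernel-verified Lean document; each statement's English description precedes it below -/
import Mathlib

section
/- Let A be a unital complex *-algebra with a sum-of-squares cone, and suppose every positive element of A is a sum of hermitian squares (the SOS property). If the set of positive elements of a countable computably-presented sub-ring A_Q is coRE-hard, then coRE ⊆ RE, a contradiction; hence if positivity in A is coRE-hard for elements of A_Q, then A does not have the SOS property, i.e., there exists a positive element of A_Q which is not a sum of hermitian squares in A. -/
/-!
Sums of hermitian squares are positive in every `*`-representation, so if positivity and SOS
agreed on `A_Q`, positivity would inherit the semidecidability of SOS certificates. A coRE-hard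
r.e. predicate cannot exist, however: pulling the complement of the halting problem back along
the reduction would make it r.e.
-/

/-- An element is a sum of hermitian squares `Σ bᵢ* bᵢ`. -/
def IsSOS {A : Type*} [Ring A] [StarRing A] (a : A) : Prop :=
  a ∈ AddSubmonoid.closure {x : A | ∃ b : A, x = star b * b}

/-- An element of a complex `*`-algebra is positive if its image under every `*`-representation
on a complex Hilbert space is a positive operator. -/
def IsPositiveElt {B : Type} [Ring B] [Algebra ℂ B] [StarRing B] (a : B) : Prop :=
  ∀ (H : Type) [NormedAddCommGroup H] [InnerProductSpace ℂ H] [CompleteSpace H]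
    (π : B →⋆ₐ[ℂ] (H →L[ℂ] H)), (π a).IsPositive

open Nat.Partrec (Code)

theorem IsSOS.isPositiveElt {A : Type} [Ring A] [Algebra ℂ A] [StarRing A] {a : A}
    (h : IsSOS a) : IsPositiveElt a := by
  intro H _ _ _ π
  induction h using AddSubmonoid.closure_induction with
  | mem x hx =>
    obtain ⟨b, rfl⟩ := hx
    rw [map_mul, map_star, ContinuousLinearMap.star_eq_adjoint]
    exact ContinuousLinearMap.isPositive_adjoint_comp_self (π b)
  | zero => simp only [map_zero, ContinuousLinearMap.isPositive_zero]
  | add x y _ _ hx hy => simpa only [map_add] using hx.add hy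

theorem REPred.comp {α β : Type*} [Primcodable α] [Primcodable β] {p : β → Prop}
    (hp : REPred p) {f : α → β} (hf : Computable f) : REPred fun a => p (f a) :=
  Partrec.comp hp hf

theorem ManyOneReducible.rePred {α β : Type*} [Primcodable α] [Primcodable β] {p : α → Prop}
    {q : β → Prop} (h : p ≤₀ q) (hq : REPred q) : REPred p :=
  let ⟨_, hf, hpq⟩ := h
  (hq.comp hf).of_eq fun a => (hpq a).symm

def IsCoREHard (q : ℕ → Prop) : Prop :=
  ∀ p : ℕ → Prop, REPred p → (fun n => ¬ p n) ≤₀ q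

theorem IsCoREHard.not_rePred {q : ℕ → Prop} (h : IsCoREHard q) : ¬ REPred q := fun hq => by
  let halts : ℕ → Prop := fun n => (Code.eval (Denumerable.ofNat Code n) 0).Dom
  have halts_re : REPred halts :=
    (ComputablePred.halting_problem_re 0).comp (Computable.ofNat Code)
  have not_halts_reduces : (fun c : Code => ¬ (c.eval 0).Dom) ≤₀ fun n => ¬ halts n :=
    ⟨Encodable.encode, Computable.encode, fun c => by simp only [halts, Denumerable.ofNat_encode]⟩
  exact ComputablePred.halting_problem_not_re 0
    ((not_halts_reduces.trans (h halts halts_re)).rePred hq)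

/-- let `A` be a unital complex `*`-algebra and let `AQ : ℕ → A` enumerate a
countable computably-presented subring `A_Q` (elements encoded by natural numbers).  Suppose
sum-of-squares certificates are semidecidable (`RePred fun n => IsSOS (AQ n)`), and that
positivity of elements of `A_Q` is coRE-hard, i.e. the complement of any r.e. set many-one
reduces to `{n | AQ n is positive}`.  Then (since otherwise coRE ⊆ RE, a contradiction) `A`
does not have the SOS property: some positive element of `A_Q` is not a sum of hermitian
squares in `A`. -/
theorem coRE_hard_positivity_implies_not_SOS {A : Type} [Ring A] [Algebra ℂ A] [StarRing A]
    (AQ : ℕ → A)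
    (hSOSre : REPred fun n => IsSOS (AQ n))
    (hard : ∀ p : ℕ → Prop, REPred p →
      ∃ f : ℕ → ℕ, Computable f ∧ ∀ n, (¬ p n ↔ IsPositiveElt (AQ (f n)))) :
    ∃ n : ℕ, IsPositiveElt (AQ n) ∧ ¬ IsSOS (AQ n) := by
  by_contra! positive_imp_SOS
  have positive_re : REPred fun n => IsPositiveElt (AQ n) :=
    hSOSre.of_eq fun n => ⟨IsSOS.isPositiveElt, positive_imp_SOS n⟩
  exact IsCoREHard.not_rePred (q := fun n => IsPositiveElt (AQ n)) hard positive_re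
end

section
/- Let G = ⟨S : R⟩ be a group presentation and let y ∈ S. Then the natural map from G to H := ⟨G, s, t : y = st, s² = t² = 1⟩ is injective, i.e., G embeds as a subgroup of H. -/
open FreeGroup

variable {S : Type*}

/-- The relations of `H = ⟨G, s, t : y = st, s² = t² = 1⟩`, where the generators of `G = ⟨S : R⟩`
are included via `Sum.inl` and the two new generators `s, t` are `Sum.inr false, Sum.inr true`. -/
def extendedRels (R : Set (FreeGroup S)) (y : S) : Set (FreeGroup (S ⊕ Bool)) :=
  (FreeGroup.map Sum.inl) '' R ∪
    { (FreeGroup.of (Sum.inl y))⁻¹ * (FreeGroup.of (Sum.inr false) * FreeGroup.of (Sum.inr true)),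
      (FreeGroup.of (Sum.inr false)) ^ 2,
      (FreeGroup.of (Sum.inr true)) ^ 2 }

/-! Let `n` be the order of `y` in `G` (`n = 0` for infinite order, and `ZMod 0 = ℤ`). In the
dihedral group `D_n` the reflections `s = sr 0` and `t = sr 1` are involutions with `st = r 1` of
order `n`, so one can form the amalgamated product `P = G *_{ℤ/n} D_n` identifying `y` with `st`.
The factors of an amalgamated product of groups embed into it, and the relations of `H` hold in
`P`; hence the embedding `G → P` factors through `G → H`, which is therefore injective. -/

section ZModPowers

variable {G : Type*} [Group G] {n : ℕ}

noncomputable def zmodPowersHom (g : G) (hg : orderOf g = n) : Multiplicative (ZMod n) →* G :=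
  AddMonoidHom.toMultiplicativeLeft <|
    ZMod.lift n ⟨zmultiplesHom _ (Additive.ofMul g), by
      simp [← hg, ← ofMul_pow, pow_orderOf_eq_one]⟩

theorem zmodPowersHom_ofAdd_intCast (g : G) (hg : orderOf g = n) (k : ℤ) :
    zmodPowersHom g hg (.ofAdd k) = g ^ k := by
  simp [zmodPowersHom, ← ofMul_zpow]

theorem zmodPowersHom_injective (g : G) (hg : orderOf g = n) :
    Function.Injective (zmodPowersHom g hg) := by
  refine (injective_iff_map_eq_one _).2 fun x hx => ?_
  obtain ⟨k, rfl⟩ : ∃ k : ℤ, Multiplicative.ofAdd (k : ZMod n) = x :=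
    ZMod.intCast_surjective x.toAdd
  rw [zmodPowersHom_ofAdd_intCast, ← orderOf_dvd_iff_zpow_eq_one, hg,
    ← ZMod.intCast_zmod_eq_zero_iff_dvd] at hx
  rw [hx, ofAdd_zero]

end ZModPowers

universe u

section Amalgam

variable {G K : Type u} [Group G] [Group K]

variable (G K) in
abbrev pairFamily : Bool → Type u := fun b => cond b G K

instance pairFamily.instGroup : ∀ b, Group (pairFamily G K b)
  | true => inferInstanceAs (Group G)
  | false => inferInstanceAs (Group K)

noncomputable def cyclicAmalgamDiagram {g : G} {k : K} (h : orderOf g = orderOf k) :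
    ∀ b, Multiplicative (ZMod (orderOf g)) →* pairFamily G K b
  | true => zmodPowersHom g rfl
  | false => zmodPowersHom k h.symm

theorem exists_injective_amalgam_of_orderOf_eq {g : G} {k : K} (h : orderOf g = orderOf k) :
    ∃ (P : Type u) (_ : Group P) (ι₁ : G →* P) (ι₂ : K →* P),
      Function.Injective ι₁ ∧ ι₁ g = ι₂ k := by
  have hφ : ∀ b, Function.Injective (cyclicAmalgamDiagram h b)
    | true => zmodPowersHom_injective g rfl
    | false => zmodPowersHom_injective k h.symm
  refine ⟨Monoid.PushoutI (cyclicAmalgamDiagram h), inferInstance,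
    Monoid.PushoutI.of (φ := cyclicAmalgamDiagram h) true,
    Monoid.PushoutI.of (φ := cyclicAmalgamDiagram h) false,
    Monoid.PushoutI.of_injective hφ true, ?_⟩
  have hg := Monoid.PushoutI.of_apply_eq_base (cyclicAmalgamDiagram h) true (.ofAdd (1 : ℤ))
  have hk := Monoid.PushoutI.of_apply_eq_base (cyclicAmalgamDiagram h) false (.ofAdd (1 : ℤ))
  simp only [cyclicAmalgamDiagram, zmodPowersHom_ofAdd_intCast, zpow_one] at hg hk
  exact hg.trans hk.symm

end Amalgam

theorem exists_injective_involutions_mul_eq {G : Type u} [Group G] (g : G) :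
    ∃ (P : Type u) (_ : Group P) (ι : G →* P) (s t : P),
      Function.Injective ι ∧ s ^ 2 = 1 ∧ t ^ 2 = 1 ∧ s * t = ι g := by
  let e : DihedralGroup (orderOf g) ≃* ULift.{u} (DihedralGroup (orderOf g)) :=
    MulEquiv.ulift.symm
  have hr : orderOf g = orderOf (e (.r 1)) := by
    rw [MulEquiv.orderOf_eq, DihedralGroup.orderOf_r_one]
  obtain ⟨P, _, ι, κ, hι, hgr⟩ := exists_injective_amalgam_of_orderOf_eq hr
  have hsr (i : ZMod (orderOf g)) : κ (e (.sr i)) ^ 2 = 1 := by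
    rw [← _root_.map_pow, ← _root_.map_pow, sq, DihedralGroup.sr_mul_self, _root_.map_one,
      _root_.map_one]
  refine ⟨P, _, ι, κ (e (.sr 0)), κ (e (.sr 1)), hι, hsr 0, hsr 1, ?_⟩
  rw [← _root_.map_mul, ← _root_.map_mul, DihedralGroup.sr_mul_sr, sub_zero, hgr]

def extendedInclusion (R : Set (FreeGroup S)) (y : S) :
    PresentedGroup R →* PresentedGroup (extendedRels R y) :=
  PresentedGroup.map (FreeGroup.map Sum.inl) fun r hr => Or.inl ⟨r, hr, rfl⟩

theorem extendedInclusion_of (R : Set (FreeGroup S)) (y : S) (a : S) :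
    extendedInclusion R y (PresentedGroup.of a) = PresentedGroup.of (Sum.inl a) :=
  rfl

theorem extendedInclusion_injective {R : Set (FreeGroup S)} {y : S} {P : Type*} [Group P]
    {ι : PresentedGroup R →* P} (hι : Function.Injective ι) {s t : P} (hs : s ^ 2 = 1)
    (ht : t ^ 2 = 1) (hst : s * t = ι (PresentedGroup.of y)) :
    Function.Injective (extendedInclusion R y) := by
  let f : S ⊕ Bool → P := Sum.elim (fun a => ι (PresentedGroup.of a)) fun b => cond b t s
  have hlift_inl : (FreeGroup.lift f).comp (FreeGroup.map Sum.inl) = ι.comp (PresentedGroup.mk R) :=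
    FreeGroup.ext_hom _ _ fun _ => by simp [f, PresentedGroup.of]
  have hf : ∀ r ∈ extendedRels R y, FreeGroup.lift f r = 1 := by
    rintro _ (⟨r, hr, rfl⟩ | rfl | rfl | rfl)
    · rw [← MonoidHom.comp_apply, hlift_inl, MonoidHom.comp_apply, PresentedGroup.one_of_mem hr,
        _root_.map_one]
    · simp [f, hst]
    · simpa [f] using hs
    · simpa [f] using ht
  have hcomp : (PresentedGroup.toGroup hf).comp (extendedInclusion R y) = ι :=
    PresentedGroup.ext fun a => PresentedGroup.toGroup.of hf
  refine Function.Injective.of_comp (f := PresentedGroup.toGroup hf) ?_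
  rwa [← MonoidHom.coe_comp, hcomp]

/-- Let `G = ⟨S : R⟩` be a group presentation and `y ∈ S`.  Then the natural map
from `G` to `H = ⟨G, s, t : y = st, s² = t² = 1⟩` (the homomorphism sending each generator of `G`
to the corresponding generator of `H`) is injective, i.e. `G` embeds as a subgroup of `H`. -/
theorem presentedGroup_embeds_in_involution_extension (R : Set (FreeGroup S)) (y : S) :
    ∃ φ : PresentedGroup R →* PresentedGroup (extendedRels R y),
      (∀ a : S, φ (PresentedGroup.of a) = PresentedGroup.of (Sum.inl a)) ∧
        Function.Injective φ := by
  obtain ⟨P, _, ι, s, t, hι, hs, ht, hst⟩ :=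
    exists_injective_involutions_mul_eq (PresentedGroup.of y : PresentedGroup R)
  exact ⟨extendedInclusion R y, extendedInclusion_of R y, extendedInclusion_injective hι hs ht hst⟩
end

section
/- Let H₁,…,H_m and K₁,…,K_m be subgroups of a group G with isomorphisms φᵢ : Hᵢ → Kᵢ, and let L = ⟨G, t₁,…,t_m : tᵢ h tᵢ⁻¹ = φᵢ(h) for all h ∈ Hᵢ⟩ be the iterated HNN extension. If w = g₀ t_{i₁}^{e₁} g₁ ⋯ t_{iₙ}^{eₙ} gₙ with gⱼ ∈ G, eⱼ ∈ {±1}, and w = 1 in L, then either (a) n = 0 and g₀ = 1 in G, or (b) there is 1 ≤ j < n with eⱼ = 1 = -e_{j+1}, iⱼ = i_{j+1}, and gⱼ ∈ H_{iⱼ}, or (c) there is 1 ≤ j < n with eⱼ = -1 = -e_{j+1}, iⱼ = i_{j+1}, and gⱼ ∈ K_{iⱼ}. -/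
open Monoid

variable {G : Type*} [Group G]

/-- The defining relations `tᵢ h tᵢ⁻¹ = φᵢ(h)` of the iterated HNN extension, as elements of the
free product of `G` with the free group on the stable letters `t₁, …, t_m`. -/
def hnnRels (m : ℕ) (H K : Fin m → Subgroup G) (φ : ∀ i, H i ≃* K i) :
    Set (Coprod G (FreeGroup (Fin m))) :=
  {x | ∃ (i : Fin m) (h : H i),
    x = Coprod.inr (FreeGroup.of i) * Coprod.inl (h : G) * (Coprod.inr (FreeGroup.of i))⁻¹ *
        (Coprod.inl ((φ i h : G)))⁻¹}

/-- The iterated HNN extension `L = ⟨G, t₁,…,t_m : tᵢ h tᵢ⁻¹ = φᵢ(h) for all h ∈ Hᵢ⟩`. -/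
def IteratedHNN (m : ℕ) (H K : Fin m → Subgroup G) (φ : ∀ i, H i ≃* K i) : Type _ :=
  Coprod G (FreeGroup (Fin m)) ⧸ Subgroup.normalClosure (hnnRels m H K φ)

instance (m : ℕ) (H K : Fin m → Subgroup G) (φ : ∀ i, H i ≃* K i) :
    Group (IteratedHNN m H K φ) := by
  unfold IteratedHNN; infer_instance

/-- The canonical map `G → L`. -/
def hnnBase (m : ℕ) (H K : Fin m → Subgroup G) (φ : ∀ i, H i ≃* K i) :
    G →* IteratedHNN m H K φ :=
  (QuotientGroup.mk' (Subgroup.normalClosure (hnnRels m H K φ))).comp Coprod.inl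

/-- The stable letters `tᵢ ∈ L`. -/
def hnnStable (m : ℕ) (H K : Fin m → Subgroup G) (φ : ∀ i, H i ≃* K i) (i : Fin m) :
    IteratedHNN m H K φ :=
  QuotientGroup.mk' (Subgroup.normalClosure (hnnRels m H K φ))
    (Coprod.inr (FreeGroup.of i))

/-!
Map `L` to the top of the tower `G = P₀ ≤ P₁ ≤ ⋯ ≤ P_m` of ordinary HNN extensions
`P_{k+1} = HNN(P_k, H_k, K_k, φ_k)`, sending `tᵢ` to the stable letter of `P_{i+1}`; this is
well defined because each relation of `L` already holds in the stage that adjoins `tᵢ`. By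
induction on `k`, a word in `G` and `t₀, …, t_{k-1}` that equals an element of `G` in `P_k`
either has no stable letters or contains a pinch `tᵢ^u g tᵢ^{-u}` with `g ∈ Hᵢ` (`u = 1`) or
`g ∈ Kᵢ` (`u = -1`). For the step, cut the word at its letters `t_k` into blocks `t_k^u g v`,
`v` a word in the older letters. If the blocks form a reduced word of `P_{k+1}` over `P_k`,
Mathlib's Britton lemma for one HNN extension says there are none. Otherwise two adjacent blocks
`t_k^u g v`, `t_k^{-u} …` have `g v` in the subgroup attached to `u`, and the induction
hypothesis applied to `g v` finds a pinch inside `v` or shows that `v` is empty, in which case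
`t_k^u g t_k^{-u}` is a pinch.
-/

open HNNExtension

section StableBlocks

variable {ι β α : Type*} [DecidableEq ι]

def stableBlocks (j : ι) :
    List (ι × β × α) → List (ι × β × α) × List (β × α × List (ι × β × α))
  | [] => ([], [])
  | (i, u, g) :: w =>
    if i = j then ([], (u, g, (stableBlocks j w).1) :: (stableBlocks j w).2)
    else ((i, u, g) :: (stableBlocks j w).1, (stableBlocks j w).2)

theorem stableBlocks_spec (j : ι) (w : List (ι × β × α)) :
    w = (stableBlocks j w).1 ++
      (stableBlocks j w).2.flatMap fun z => (j, z.1, z.2.1) :: z.2.2 := by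
  induction w with
  | nil => rfl
  | cons x w ih =>
    obtain ⟨i, u, g⟩ := x
    by_cases hij : i = j
    · subst hij
      simp only [stableBlocks]
      exact congrArg _ ih
    · simp only [stableBlocks, if_neg hij, List.cons_append]
      exact congrArg _ ih

theorem stableBlocks_ne (j : ι) (w : List (ι × β × α)) :
    (∀ x ∈ (stableBlocks j w).1, x.1 ≠ j) ∧
      ∀ z ∈ (stableBlocks j w).2, ∀ x ∈ z.2.2, x.1 ≠ j := by
  induction w with
  | nil => simp [stableBlocks]
  | cons x w ih =>
    obtain ⟨i, u, g⟩ := x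
    by_cases hij : i = j
    · simp only [stableBlocks, if_pos hij, List.not_mem_nil, List.mem_cons]
      refine ⟨fun _ h => h.elim, ?_⟩
      rintro z (rfl | hz)
      exacts [ih.1, ih.2 z hz]
    · simp only [stableBlocks, if_neg hij, List.mem_cons]
      refine ⟨?_, ih.2⟩
      rintro x (rfl | hx)
      exacts [hij, ih.1 x hx]

end StableBlocks

theorem List.exists_of_pair_infix_ofFn {α : Type*} {n : ℕ} {f : Fin n → α} {a b : α}
    (h : [a, b] <:+: List.ofFn f) :
    ∃ (j : Fin n) (hj : (j : ℕ) + 1 < n), f j = a ∧ f ⟨j + 1, hj⟩ = b := by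
  obtain ⟨k, hk, hget⟩ := List.infix_iff_getElem?.1 h
  have h0 := hget 0 (by simp)
  have h1 := hget 1 (by simp)
  simp only [List.length_cons, List.length_nil, List.length_ofFn] at hk
  simp only [List.getElem?_ofFn, Nat.zero_add, dif_pos (show k < n by omega),
    dif_pos (show 1 + k < n by omega), Option.some.injEq] at h0 h1
  exact ⟨⟨k, by omega⟩, show k + 1 < n by omega, h0, by simpa [Nat.add_comm] using h1⟩

section Words

variable {ι M : Type*} [Group M]

def evalWord (f : G →* M) (s : ι → M) (g₀ : G) (w : List (ι × ℤˣ × G)) : M :=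
  f g₀ * (w.map fun x => s x.1 ^ (x.2.1 : ℤ) * f x.2.2).prod

variable (f : G →* M) (s : ι → M)

@[simp]
theorem evalWord_nil (g₀ : G) : evalWord f s g₀ [] = f g₀ := by
  simp [evalWord]

@[simp]
theorem evalWord_cons (g₀ : G) (i : ι) (u : ℤˣ) (g : G) (w : List (ι × ℤˣ × G)) :
    evalWord f s g₀ ((i, u, g) :: w) = f g₀ * (s i ^ (u : ℤ) * evalWord f s g w) := by
  simp [evalWord, mul_assoc]

theorem map_evalWord {N : Type*} [Group N] (ψ : M →* N) (g₀ : G)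
    (w : List (ι × ℤˣ × G)) :
    ψ (evalWord f s g₀ w) = evalWord (ψ.comp f) (ψ ∘ s) g₀ w := by
  simp [evalWord, map_list_prod, List.map_map, Function.comp_def]

end Words

section Pinch

variable {ι : Type*}

def HasPinch (H K : ι → Subgroup G) (w : List (ι × ℤˣ × G)) : Prop :=
  ∃ i u a b, [(i, u, a), (i, -u, b)] <:+: w ∧ a ∈ toSubgroup (H i) (K i) u

theorem HasPinch.mono {H K : ι → Subgroup G} {w w' : List (ι × ℤˣ × G)}
    (h : HasPinch H K w) (hw : w <:+: w') : HasPinch H K w' :=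
  let ⟨i, u, a, b, hab, hmem⟩ := h
  ⟨i, u, a, b, hab.trans hw, hmem⟩

end Pinch

theorem HNNExtension.toSubgroup_map {G' : Type*} [Group G'] (f : G →* G') (A B : Subgroup G)
    (u : ℤˣ) : toSubgroup (A.map f) (B.map f) u = (toSubgroup A B u).map f := by
  rcases Int.units_eq_one_or u with rfl | rfl <;> rfl

universe u

structure Overgroup (G : Type u) [Group G] : Type (u + 1) where
  carrier : Type u
  [group : Group carrier]
  emb : G →* carrier
  emb_injective : Function.Injective emb

attribute [instance] Overgroup.group

noncomputable section

namespace Overgroup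

def self (G : Type u) [Group G] : Overgroup G := ⟨G, MonoidHom.id G, Function.injective_id⟩

variable (P : Overgroup G) {A B : Subgroup G}

def mapEquiv (e : A ≃* B) : A.map P.emb ≃* B.map P.emb :=
  ((A.equivMapOfInjective P.emb P.emb_injective).symm.trans e).trans
    (B.equivMapOfInjective P.emb P.emb_injective)

-- Reducible, so that the instances and lemmas of `HNNExtension` apply to its carrier.
abbrev hnnExtension (e : A ≃* B) : Overgroup G where
  carrier := HNNExtension P.carrier (A.map P.emb) (B.map P.emb) (P.mapEquiv e)
  emb := of.comp P.emb
  emb_injective := (of_injective _).comp P.emb_injective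

theorem t_mul_emb_mul_inv_t (e : A ≃* B) (a : A) :
    (t : (P.hnnExtension e).carrier) * (P.hnnExtension e).emb a * t⁻¹ =
      (P.hnnExtension e).emb (e a) := by
  have := equiv_eq_conj (φ := P.mapEquiv e) (A.equivMapOfInjective P.emb P.emb_injective a)
  simp only [mapEquiv, MulEquiv.trans_apply, MulEquiv.symm_apply_apply,
    Subgroup.coe_equivMapOfInjective_apply] at this
  exact this.symm

variable {ι : Type*} {H K : ι → Subgroup G}

variable (H K) in
def SatisfiesBritton (s : ι → P.carrier) (S : Set ι) : Prop :=
  ∀ (w : List (ι × ℤˣ × G)) (g₀ c : G), (∀ x ∈ w, x.1 ∈ S) →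
    evalWord P.emb s g₀ w = P.emb c → (w = [] ∧ g₀ = c) ∨ HasPinch H K w

theorem satisfiesBritton_empty (s : ι → P.carrier) : P.SatisfiesBritton H K s ∅ := by
  intro w g₀ c hw h
  obtain rfl : w = [] := List.eq_nil_iff_forall_not_mem.2 fun x hx => hw x hx
  exact Or.inl ⟨rfl, P.emb_injective (by simpa using h)⟩

theorem SatisfiesBritton.hasPinch {P : Overgroup G} {s : ι → P.carrier} {S : Set ι}
    (hP : P.SatisfiesBritton H K s S) {j : ι} {u : ℤˣ} {g g' : G}
    {seg : List (ι × ℤˣ × G)} (hseg : ∀ x ∈ seg, x.1 ∈ S)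
    (hmem : evalWord P.emb s g seg ∈ (toSubgroup (H j) (K j) u).map P.emb) :
    HasPinch H K ((j, u, g) :: seg ++ [(j, -u, g')]) := by
  obtain ⟨h, hh, hc⟩ := hmem
  rcases hP seg g h hseg hc.symm with ⟨rfl, rfl⟩ | hpinch
  · exact ⟨j, u, g, g', List.infix_refl _, hh⟩
  · exact hpinch.mono ⟨[(j, u, g)], [(j, -u, g')], rfl⟩

variable [DecidableEq ι]

def extendStable (e : A ≃* B) (s : ι → P.carrier) (j : ι) (i : ι) :
    (P.hnnExtension e).carrier :=
  if i = j then t else of (s i)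

theorem evalWord_extendStable (e : A ≃* B) (s : ι → P.carrier) (j : ι) (g₀ : G)
    (w : List (ι × ℤˣ × G)) :
    evalWord (P.hnnExtension e).emb (P.extendStable e s j) g₀ w =
      of (evalWord P.emb s g₀ (stableBlocks j w).1) *
        ((stableBlocks j w).2.map fun z =>
          t ^ (z.1 : ℤ) * of (evalWord P.emb s z.2.1 z.2.2)).prod := by
  induction w generalizing g₀ with
  | nil => simp [stableBlocks]
  | cons x w ih =>
    obtain ⟨i, u, g⟩ := x
    by_cases hij : i = j <;> simp [stableBlocks, extendStable, hij, ih, mul_assoc]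

theorem SatisfiesBritton.hnnExtension {s : ι → P.carrier} {S : Set ι}
    (hP : P.SatisfiesBritton H K s S) {j : ι} (e : H j ≃* K j) :
    (P.hnnExtension e).SatisfiesBritton H K (P.extendStable e s j) (insert j S) := by
  intro w g₀ c hw h
  have hsplit := stableBlocks_spec j w
  obtain ⟨hpre, hseg⟩ := stableBlocks_ne j w
  have hS : ∀ x ∈ w, x.1 ≠ j → x.1 ∈ S := fun x hx hne => (hw x hx).resolve_left hne
  rw [evalWord_extendStable] at h
  set pre := (stableBlocks j w).1
  set blocks := (stableBlocks j w).2
  by_cases hchain : (blocks.map fun z => (z.1, evalWord P.emb s z.2.1 z.2.2)).IsChain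
      fun a b => a.2 ∈ toSubgroup ((H j).map P.emb) ((K j).map P.emb) a.1 → a.1 = b.1
  · have hnil : blocks = [] := by
      have := ReducedWord.toList_eq_nil_of_mem_of_range (φ := P.mapEquiv e)
        ⟨evalWord P.emb s g₀ pre, _, hchain⟩
        ⟨P.emb c, by
          simpa [NormalWord.ReducedWord.prod, List.map_map, Function.comp_def] using h.symm⟩
      simpa using this
    rw [hnil, List.flatMap_nil, List.append_nil] at hsplit
    rw [hnil, List.map_nil, List.prod_nil, mul_one] at h
    rw [hsplit]
    exact hP pre g₀ c (fun x hx => hS x (hsplit ▸ hx) (hpre x hx)) (of_injective _ h)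
  · rw [List.isChain_map, List.isChain_iff_forall_rel_of_append_cons_cons] at hchain
    push Not at hchain
    obtain ⟨x, y, M₁, M₂, hxy, hmem, hne⟩ := hchain
    dsimp only at hmem hne
    have hinf : (j, x.1, x.2.1) :: x.2.2 ++ [(j, y.1, y.2.1)] <:+: w := by
      refine ⟨pre ++ M₁.flatMap fun z => (j, z.1, z.2.1) :: z.2.2,
        y.2.2 ++ M₂.flatMap fun z => (j, z.1, z.2.1) :: z.2.2, ?_⟩
      rw [hsplit, hxy]
      simp
    rw [Int.units_ne_iff_eq_neg.mp hne.symm] at hinf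
    have hxS : ∀ a ∈ x.2.2, a.1 ∈ S := fun a ha =>
      hS a (hinf.mem (by simp [ha])) (hseg x (by simp [hxy]) a ha)
    rw [toSubgroup_map] at hmem
    exact Or.inr ((hP.hasPinch hxS hmem).mono hinf)

end Overgroup

section Tower

variable {ι : Type*} {H K : ι → Subgroup G} (φ : ∀ i, H i ≃* K i)

def hnnTower (l : List ι) : Overgroup G :=
  l.foldr (fun i P => P.hnnExtension (φ i)) (Overgroup.self G)

variable [DecidableEq ι]

def hnnTowerStable : (l : List ι) → ι → (hnnTower φ l).carrier
  | [] => 1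
  | j :: l => (hnnTower φ l).extendStable (φ j) (hnnTowerStable l) j

theorem hnnTowerStable_conj {l : List ι} {i : ι} (hi : i ∈ l) (h : H i) :
    hnnTowerStable φ l i * (hnnTower φ l).emb h * (hnnTowerStable φ l i)⁻¹ =
      (hnnTower φ l).emb (φ i h) := by
  induction l with
  | nil => simp at hi
  | cons j l ih =>
    by_cases hij : i = j
    · subst hij
      simp only [hnnTowerStable, Overgroup.extendStable, ↓reduceIte]
      exact (hnnTower φ l).t_mul_emb_mul_inv_t (φ i) h
    · have := congrArg (of (φ := (hnnTower φ l).mapEquiv (φ j)))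
        (ih (List.mem_of_ne_of_mem hij hi))
      simp only [map_mul, map_inv] at this
      simp only [hnnTowerStable, Overgroup.extendStable, if_neg hij]
      exact this

theorem satisfiesBritton_hnnTower (l : List ι) :
    (hnnTower φ l).SatisfiesBritton H K (hnnTowerStable φ l) {i | i ∈ l} := by
  induction l with
  | nil => simpa using Overgroup.satisfiesBritton_empty _ _
  | cons j l ih =>
    have hS : {i | i ∈ j :: l} = insert j {i | i ∈ l} := by ext; simp
    rw [hS]
    exact ih.hnnExtension _ (φ j)

end Tower

namespace IteratedHNN

variable {m : ℕ} {H K : Fin m → Subgroup G} (φ : ∀ i, H i ≃* K i)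

def toHNNTower : IteratedHNN m H K φ →* (hnnTower φ (List.finRange m)).carrier :=
  QuotientGroup.lift _
    (Coprod.lift (hnnTower φ _).emb (FreeGroup.lift (hnnTowerStable φ _))) <|
    Subgroup.normalClosure_le_normal <| by
      rintro _ ⟨i, h, rfl⟩
      simp [hnnTowerStable_conj φ (List.mem_finRange i) h]

theorem toHNNTower_comp_hnnBase :
    (toHNNTower φ).comp (hnnBase m H K φ) = (hnnTower φ (List.finRange m)).emb := rfl

theorem toHNNTower_hnnStable (i : Fin m) :
    toHNNTower φ (hnnStable m H K φ i) = hnnTowerStable φ (List.finRange m) i := by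
  change Coprod.lift (hnnTower φ _).emb (FreeGroup.lift (hnnTowerStable φ _))
    (Coprod.inr (FreeGroup.of i)) = _
  rw [Coprod.lift_apply_inr, FreeGroup.lift_apply_of]

end IteratedHNN

end

/-- Britton's lemma for iterated HNN extensions:
if `w = g₀ t_{i₁}^{e₁} g₁ ⋯ t_{iₙ}^{eₙ} gₙ = 1` in `L`, then either `n = 0` and `g₀ = 1` in `G`,
or some subword `t_{iⱼ}^{1} gⱼ t_{iⱼ}^{-1}` occurs with `gⱼ ∈ H_{iⱼ}`, or some subword
`t_{iⱼ}^{-1} gⱼ t_{iⱼ}^{1}` occurs with `gⱼ ∈ K_{iⱼ}`. -/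
theorem britton_lemma_iterated_hnn (m : ℕ) (H K : Fin m → Subgroup G)
    (φ : ∀ i, H i ≃* K i) (n : ℕ) (g : Fin (n + 1) → G) (e : Fin n → ℤ)
    (idx : Fin n → Fin m) (he : ∀ j, e j = 1 ∨ e j = -1)
    (hw : hnnBase m H K φ (g 0) *
        (List.ofFn (fun j : Fin n =>
          (hnnStable m H K φ (idx j)) ^ (e j) * hnnBase m H K φ (g j.succ))).prod = 1) :
    (n = 0 ∧ g 0 = 1) ∨
      (∃ (j : Fin n) (hj : (j : ℕ) + 1 < n),
        e j = 1 ∧ e ⟨(j : ℕ) + 1, hj⟩ = -1 ∧ idx j = idx ⟨(j : ℕ) + 1, hj⟩ ∧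
          g j.succ ∈ H (idx j)) ∨
      (∃ (j : Fin n) (hj : (j : ℕ) + 1 < n),
        e j = -1 ∧ e ⟨(j : ℕ) + 1, hj⟩ = 1 ∧ idx j = idx ⟨(j : ℕ) + 1, hj⟩ ∧
          g j.succ ∈ K (idx j)) := by
  set u : Fin n → ℤˣ := fun j => (Int.isUnit_iff.2 (he j)).unit
  have hu : ∀ j, (u j : ℤ) = e j := fun j => IsUnit.unit_spec _
  set w := List.ofFn fun j => (idx j, u j, g j.succ)
  have hw' : evalWord (hnnBase m H K φ) (hnnStable m H K φ) (g 0) w = 1 := by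
    simpa [evalWord, w, Function.comp_def, hu] using hw
  have hword := congrArg (IteratedHNN.toHNNTower φ) hw'
  rw [map_evalWord, IteratedHNN.toHNNTower_comp_hnnBase, map_one,
    ← map_one (hnnTower φ _).emb] at hword
  rcases satisfiesBritton_hnnTower φ (List.finRange m) w (g 0) 1
    (fun x _ => List.mem_finRange x.1)
    (by simpa [Function.comp_def, IteratedHNN.toHNNTower_hnnStable] using hword) with
    ⟨hnil, hg⟩ | ⟨i, v, a, b, hab, hmem⟩
  · exact Or.inl ⟨by simpa [w] using hnil, hg⟩
  · obtain ⟨j, hj, hfj, hfj1⟩ := List.exists_of_pair_infix_ofFn hab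
    simp only [Prod.mk.injEq] at hfj hfj1
    obtain ⟨rfl, rfl, rfl⟩ := hfj
    obtain ⟨hidx, hv, -⟩ := hfj1
    rcases Int.units_eq_one_or (u j) with h1 | h1
    · rw [h1] at hv hmem
      exact Or.inr (Or.inl ⟨j, hj, by simp [← hu, h1], by simp [← hu, hv], hidx.symm, hmem⟩)
    · rw [h1] at hv hmem
      exact Or.inr (Or.inr ⟨j, hj, by simp [← hu, h1], by simp [← hu, hv], hidx.symm, hmem⟩)
end

section
/- The homomorphism γ : F₂ → Z₃ * Z₃ sending the free generators y₁ ↦ w₁ w₂⁻¹ and y₂ ↦ w₁⁻¹ w₂ is injective, where w₁, w₂ are the order-three generators of the two free factors. -/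
/-- The free product `Z₃ * Z₃`, presented on two generators `w₀, w₁`
with relations `wᵢ³ = 1`. -/
def Z3Free2 : Type :=
  PresentedGroup {r : FreeGroup (Fin 2) | ∃ i : Fin 2, r = (FreeGroup.of i) ^ 3}

noncomputable instance : Group Z3Free2 := by unfold Z3Free2; infer_instance

/-- The canonical order-three generators of `Z₃ * Z₃`. -/
noncomputable def w (i : Fin 2) : Z3Free2 :=
  PresentedGroup.of (rels := {r : FreeGroup (Fin 2) | ∃ i : Fin 2, r = (FreeGroup.of i) ^ 3}) i

/-!
Map `Z₃ * Z₃` to Mathlib's free product `CoprodI` of two copies of `ℤ/3` and play ping-pong on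
its reduced words. For a generator `g` of `ℤ/3`, the two images are `of p * of q` with `p` in the
first factor and `q` in the second, namely `p = g, q = g⁻¹` and `p = g⁻¹, q = g`. Multiplication
by `of p * of q` sends the words not starting with the letter `q⁻¹` to words starting with `p`, and
its inverse sends the words not starting with `p` to words starting with `q⁻¹`. Since `g ≠ g⁻¹`,
the sets of words starting with each of these four letters are pairwise disjoint.
-/

universe u

namespace Monoid.CoprodI.Word

section Monoid

variable {ι : Type*} {M : ι → Type*} [∀ i, Monoid (M i)]

def withHead (l : Σ i, M i) : Set (Word M) := {w | w.toList.head? = some l}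

theorem withHead_nonempty {l : Σ i, M i} (hl : l.2 ≠ 1) : (withHead l).Nonempty :=
  ⟨cons l.2 empty (by simp [fstIdx, empty]) hl, rfl⟩

theorem disjoint_withHead {l l' : Σ i, M i} (h : l ≠ l') :
    Disjoint (withHead l) (withHead l') :=
  Set.disjoint_left.2 fun _ hl hl' => h (Option.some_injective _ (hl.symm.trans hl'))

variable [DecidableEq ι] [∀ i, DecidableEq (M i)]

theorem toList_head?_of_smul {i : ι} {m : M i} {w : Word M}
    (h : m * (equivPair i w).head ≠ 1) :
    (of m • w).toList.head? = some ⟨i, m * (equivPair i w).head⟩ := by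
  rw [of_smul_def, rcons, dif_neg h]
  rfl

end Monoid

variable {ι : Type*} [DecidableEq ι] {G : ι → Type*} [∀ i, Group (G i)] [∀ i, DecidableEq (G i)]

theorem toList_head?_of_mul_of_smul {i j : ι} (hij : i ≠ j) {p : G i} {q : G j}
    (hp : p ≠ 1) (hq : q ≠ 1) {w : Word G} (hw : w.toList.head? ≠ some ⟨j, q⁻¹⟩) :
    ((of p * of q) • w).toList.head? = some ⟨i, p⟩ := by
  have hqw : q * (equivPair j w).head ≠ 1 := by
    intro h
    have hinv : (equivPair j w).head = q⁻¹ := eq_inv_of_mul_eq_one_right h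
    apply hw
    -- `of 1 • w = w`, so this reads off the first letter of `w` itself
    simpa [hinv] using toList_head?_of_smul (m := (1 : G j)) (w := w) (by simpa [hinv])
  have hfst : fstIdx (of q • w) ≠ some i := by
    simp [fstIdx, toList_head?_of_smul hqw, Ne.symm hij]
  rw [mul_smul]
  simpa [equivPair_eq_of_fstIdx_ne hfst] using
    toList_head?_of_smul (m := p) (w := of q • w) (by simpa [equivPair_eq_of_fstIdx_ne hfst])

end Monoid.CoprodI.Word

namespace Monoid.CoprodI

open Word

theorem injective_freeGroupLift_of_mul_of {κ : Type u} [Nontrivial κ]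
    {ι : Type u} [DecidableEq ι] {G : ι → Type u} [∀ i, Group (G i)] [∀ i, DecidableEq (G i)]
    {i j : ι} (hij : i ≠ j) {p : κ → G i} {q : κ → G j}
    (hp : Function.Injective p) (hq : Function.Injective q)
    (hp1 : ∀ k, p k ≠ 1) (hq1 : ∀ k, q k ≠ 1) :
    Function.Injective (FreeGroup.lift fun k => of (p k) * of (q k)) := by
  refine FreeGroup.injective_lift_of_ping_pong (fun k => of (p k) * of (q k))
    (fun k => withHead ⟨i, p k⟩) (fun k => withHead ⟨j, (q k)⁻¹⟩)
    (fun k => withHead_nonempty (hp1 k))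
    (fun k k' hk => disjoint_withHead (by simpa using hp.ne hk))
    (fun k k' hk => disjoint_withHead (by simpa using hq.ne hk))
    (fun k k' => disjoint_withHead fun h => hij (congrArg Sigma.fst h)) ?_ ?_
  · rintro k _ ⟨w, hw, rfl⟩
    exact toList_head?_of_mul_of_smul hij (hp1 k) (hq1 k) hw
  · rintro k _ ⟨w, hw, rfl⟩
    have hinv : (fun k => of (p k) * of (q k))⁻¹ k = of (q k)⁻¹ * of (p k)⁻¹ := by simp
    rw [hinv]
    exact toList_head?_of_mul_of_smul (Ne.symm hij) (inv_ne_one.2 (hq1 k)) (inv_ne_one.2 (hp1 k))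
      (by rwa [inv_inv])

end Monoid.CoprodI

open Monoid

namespace Z3Free2

noncomputable def toCoprodI : Z3Free2 →* CoprodI fun _ : Fin 2 => Multiplicative (ZMod 3) :=
  PresentedGroup.toGroup (f := fun i => CoprodI.of (i := i) (Multiplicative.ofAdd 1)) <| by
    rintro _ ⟨i, rfl⟩
    rw [map_pow, FreeGroup.lift_apply_of, ← map_pow]
    exact (map_eq_one_iff _ (CoprodI.of_injective i)).2 (by decide)

theorem toCoprodI_w (i : Fin 2) :
    toCoprodI (w i) = CoprodI.of (i := i) (Multiplicative.ofAdd 1) :=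
  PresentedGroup.toGroup.of _

end Z3Free2

/-- The homomorphism `γ : F₂ → Z₃ * Z₃` sending the free generators
`y₁ ↦ w₁ w₂⁻¹` and `y₂ ↦ w₁⁻¹ w₂` is injective. -/
theorem freeGroup_two_embeds_in_Z3_free_product_two :
    Function.Injective
      (FreeGroup.lift (fun b : Bool =>
        if b then (w 0)⁻¹ * w 1 else w 0 * (w 1)⁻¹)) := by
  set g : Multiplicative (ZMod 3) := Multiplicative.ofAdd 1
  have hcomp : Z3Free2.toCoprodI.comp (FreeGroup.lift (fun b : Bool =>
        if b then (w 0)⁻¹ * w 1 else w 0 * (w 1)⁻¹)) =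
      FreeGroup.lift fun b => CoprodI.of (i := 0) (if b then g⁻¹ else g) *
        CoprodI.of (i := 1) (if b then g else g⁻¹) := by
    ext (_ | _) <;> simp [Z3Free2.toCoprodI_w, g]
  refine Function.Injective.of_comp (f := Z3Free2.toCoprodI) ?_
  rw [← MonoidHom.coe_comp, hcomp]
  exact CoprodI.injective_freeGroupLift_of_mul_of (by decide) (by decide) (by decide)
    (by decide) (by decide)
end

section
/- Let A ∈ B(H) be a bounded operator on a Hilbert space, and set Ã := sgn((A + A*)/2) via Borel functional calculus, where sgn(t) = 1 for t ≥ 0 and −1 for t < 0. Then Ã is a unitary involution (Ã* = Ã, Ã² = Id). Moreover, if ξ ∈ H and ε ≥ 0 satisfy ‖(A² − Id)ξ‖ ≤ ε, ‖((A*)² − Id)ξ‖ ≤ ε, ‖(AA* − Id)ξ‖ ≤ ε, ‖(A*A − Id)ξ‖ ≤ ε, and ‖(A − A*)ξ‖ ≤ ε, then ‖(A − Ã)ξ‖ ≤ 2ε and ‖(A* − Ã)ξ‖ ≤ 2ε. -/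
/-!
Put `B = ℜ A` and `S = sgn B`, realised as the reflection fixing `ker B⁻` and negating its
orthogonal complement. Then `S` is a self-adjoint unitary, it commutes with every operator
commuting with `A` and `A*` (such operators preserve `ker B⁻`), and `S B = B⁺ + B⁻ = |B|`.
Hence `B - S = S (|B| - 1)` and `1 - B² = (1 + |B|)(1 - |B|)`; as `S` is isometric and
`1 + |B| ≥ 1`, this gives `‖(B - S)ξ‖ ≤ ‖(1 - B²)ξ‖ ≤ ε`, the last step because `1 - B²` is
the average of `1 - A²`, `1 - (A*)²`, `1 - AA*` and `1 - A*A`. Finally `A - B` and `A* - B`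
are `±(A - A*)/2`.
-/

open ContinuousLinearMap ComplexStarModule

lemma IsStarProjection.commute_of_mul_eq_mul_mul {R : Type*} [Ring R] [StarRing R] {p c : R}
    (hp : IsStarProjection p) (hc : c * p = p * c * p) (hc' : star c * p = p * star c * p) :
    Commute p c := by
  have hpc : p * c = p * c * p := by
    simpa [star_mul, hp.isSelfAdjoint.star_eq, mul_assoc] using congr(star $hc')
  exact hpc.trans hc.symm

lemma Commute.realPart_left {R : Type*} [Ring R] [StarRing R] [Algebra ℂ R] [StarModule ℂ R]
    {a c : R} (h : Commute a c) (h' : Commute (star a) c) : Commute (ℜ a : R) c := by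
  rw [realPart_apply_coe]
  exact (h.add_left h').smul_left _

section InnerProductSpace

variable {𝕜 E : Type*} [RCLike 𝕜] [NormedAddCommGroup E] [InnerProductSpace 𝕜 E]

lemma ContinuousLinearMap.IsPositive.norm_le_norm_one_add_apply {s : E →L[𝕜] E}
    (hs : s.IsPositive) (x : E) : ‖x‖ ≤ ‖(1 + s) x‖ := by
  have hsq : ‖x‖ ^ 2 ≤ ‖(1 + s) x‖ ^ 2 := by
    rw [add_apply, one_apply_eq_self, norm_add_sq (𝕜 := 𝕜), inner_re_symm (𝕜 := 𝕜)]
    nlinarith [hs.re_inner_nonneg_left x, norm_nonneg (s x)]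
  exact (pow_le_pow_iff_left₀ (norm_nonneg _) (norm_nonneg _) two_ne_zero).mp hsq

variable [CompleteSpace E]

lemma Submodule.commute_starProjection {U : Submodule 𝕜 E} [U.HasOrthogonalProjection]
    {c : E →L[𝕜] E} (hc : ∀ x ∈ U, c x ∈ U) (hc' : ∀ x ∈ U, star c x ∈ U) :
    Commute U.starProjection c := by
  have key : ∀ d : E →L[𝕜] E, (∀ x ∈ U, d x ∈ U) →
      d * U.starProjection = U.starProjection * d * U.starProjection := fun d hd ↦ by
    ext x
    exact (Submodule.starProjection_eq_self_iff.mpr (hd _ (U.starProjection_apply_mem x))).symm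
  exact isStarProjection_starProjection.commute_of_mul_eq_mul_mul (key c hc) (key _ hc')

lemma ContinuousLinearMap.commute_starProjection_ker {a c : E →L[𝕜] E} (h : Commute a c)
    (h' : Commute a (star c)) : Commute a.ker.starProjection c := by
  have mapsTo_ker : ∀ d : E →L[𝕜] E, Commute a d → ∀ x ∈ a.ker, d x ∈ a.ker := fun d hd x hx ↦ by
    change a x = 0 at hx
    change a (d x) = 0
    rw [← mul_apply_eq_comp, hd.eq, mul_apply_eq_comp, hx, map_zero]
  exact Submodule.commute_starProjection (mapsTo_ker c h) (mapsTo_ker _ h')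

end InnerProductSpace

namespace ContinuousLinearMap

variable {H : Type*} [NormedAddCommGroup H] [InnerProductSpace ℂ H] [CompleteSpace H]

/-- `sgn a` of the Borel functional calculus, with the convention `sgn 0 = 1`. -/
noncomputable def sign (a : H →L[ℂ] H) : H →L[ℂ] H := 2 * a⁻.ker.starProjection - 1

lemma sign_mem_unitary (a : H →L[ℂ] H) : a.sign ∈ unitary (H →L[ℂ] H) :=
  isStarProjection_starProjection.two_mul_sub_one_mem_unitary

lemma isSelfAdjoint_sign (a : H →L[ℂ] H) : IsSelfAdjoint a.sign := by
  simp [IsSelfAdjoint, sign, (isSelfAdjoint_starProjection _).star_eq, two_mul]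

lemma sign_mul_sign (a : H →L[ℂ] H) : a.sign * a.sign = 1 := by
  simpa [(isSelfAdjoint_sign a).star_eq] using Unitary.star_mul_self_of_mem (sign_mem_unitary a)

lemma sign_mul_posPart (a : H →L[ℂ] H) : a.sign * a⁺ = a⁺ := by
  ext x
  have hx : a⁺ x ∈ a⁻.ker := by
    change a⁻ (a⁺ x) = 0
    rw [← mul_apply_eq_comp, CFC.negPart_mul_posPart, zero_apply]
  simp [sign, Submodule.starProjection_eq_self_iff.mpr hx, two_mul]

lemma sign_mul_negPart (a : H →L[ℂ] H) : a.sign * a⁻ = -a⁻ := by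
  ext x
  have hx : a⁻ x ∈ a⁻.kerᗮ := by
    rw [Submodule.mem_orthogonal]
    intro u hu
    change a⁻ u = 0 at hu
    rw [← adjoint_inner_left, ← star_eq_adjoint, (CFC.negPart_nonneg a).isSelfAdjoint.star_eq, hu,
      inner_zero_left]
  simp [sign, (Submodule.starProjection_apply_eq_zero_iff _).mpr hx]

lemma sign_mul_self {a : H →L[ℂ] H} (ha : IsSelfAdjoint a) : a.sign * a = CFC.abs a := by
  calc a.sign * a = a.sign * (a⁺ - a⁻) := by rw [CFC.posPart_sub_negPart a ha]
    _ = CFC.abs a := by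
      rw [mul_sub, sign_mul_posPart, sign_mul_negPart, sub_neg_eq_add, CFC.posPart_add_negPart a ha]

lemma commute_sign {a c : H →L[ℂ] H} (h : Commute a c) (h' : Commute a (star c)) :
    Commute a.sign c :=
  ((Commute.ofNat_left 2 c).mul_left
    (commute_starProjection_ker (h.cfcₙ_real _) (h'.cfcₙ_real _))).sub_left (Commute.one_left c)

lemma norm_sub_sign_apply_le {a : H →L[ℂ] H} (ha : IsSelfAdjoint a) (x : H) :
    ‖(a - a.sign) x‖ ≤ ‖(1 - a * a) x‖ := by
  have h_sub : a - a.sign = a.sign * (CFC.abs a - 1) := by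
    rw [← sign_mul_self ha, mul_sub, ← mul_assoc, sign_mul_sign, one_mul, mul_one]
  have h_sq : 1 - a * a = (1 + CFC.abs a) * (1 - CFC.abs a) := by
    have h_abs : CFC.abs a * CFC.abs a = a * a := by rw [CFC.abs_mul_abs, ha.star_eq]
    rw [← h_abs]; noncomm_ring
  calc ‖(a - a.sign) x‖ = ‖(1 - CFC.abs a) x‖ := by
        rw [h_sub, mul_apply_eq_comp, norm_map_of_mem_unitary (sign_mem_unitary a), ← norm_neg,
          ← neg_apply, neg_sub]
    _ ≤ ‖(1 + CFC.abs a) ((1 - CFC.abs a) x)‖ :=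
      ((nonneg_iff_isPositive _).mp (CFC.abs_nonneg a)).norm_le_norm_one_add_apply _
    _ = ‖(1 - a * a) x‖ := by rw [h_sq, mul_apply_eq_comp]

lemma norm_sub_realPart_apply (A : H →L[ℂ] H) (x : H) :
    ‖(A - ℜ A) x‖ = ‖(A - star A) x‖ / 2 := by
  have h : A - ℜ A = (2⁻¹ : ℝ) • (A - star A) := by rw [realPart_apply_coe]; module
  rw [h, smul_apply, norm_smul, Real.norm_of_nonneg (by norm_num), inv_mul_eq_div]

lemma norm_star_sub_realPart_apply (A : H →L[ℂ] H) (x : H) :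
    ‖(star A - ℜ A) x‖ = ‖(A - star A) x‖ / 2 := by
  have h : star A - ℜ A = (2⁻¹ : ℝ) • (star A - A) := by rw [realPart_apply_coe]; module
  rw [h, smul_apply, norm_smul, Real.norm_of_nonneg (by norm_num), inv_mul_eq_div, sub_apply,
    sub_apply, norm_sub_rev]

lemma norm_one_sub_realPart_mul_realPart_apply_le (A : H →L[ℂ] H) (x : H) :
    ‖(1 - ℜ A * ℜ A : H →L[ℂ] H) x‖ ≤ (‖(A * A - 1) x‖ + ‖(star A * star A - 1) x‖
      + ‖(A * star A - 1) x‖ + ‖(star A * A - 1) x‖) / 4 := by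
  have h : (1 - ℜ A * ℜ A : H →L[ℂ] H) = (-4⁻¹ : ℝ) • ((A * A - 1) + (star A * star A - 1)
      + (A * star A - 1) + (star A * A - 1)) := by
    rw [realPart_apply_coe, smul_mul_smul, add_mul, mul_add, mul_add]
    module
  rw [h, smul_apply, norm_smul, Real.norm_of_nonpos (by norm_num), neg_neg, inv_mul_eq_div]
  gcongr
  simp only [add_apply]
  exact norm_add₄_le

end ContinuousLinearMap

/-- For any bounded operator `A ∈ B(H)` on a complex Hilbert space, the operator
`Ã := sgn((A + A*)/2)` (defined by Borel functional calculus, so lying in the von Neumann algebra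
`C*⟨A⟩'' `, here expressed as the double centralizer of `{A, A*}`) is a unitary involution, and
whenever a vector `ξ` satisfies `‖(A² − 1)ξ‖ ≤ ε`, `‖((A*)² − 1)ξ‖ ≤ ε`, `‖(AA* − 1)ξ‖ ≤ ε`,
`‖(A*A − 1)ξ‖ ≤ ε` and `‖(A − A*)ξ‖ ≤ ε`, one has `‖(A − Ã)ξ‖ ≤ 2ε` and `‖(A* − Ã)ξ‖ ≤ 2ε`. -/
theorem sign_of_real_part_is_unitary_involution_and_approximates
    {H : Type*} [NormedAddCommGroup H] [InnerProductSpace ℂ H] [CompleteSpace H]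
    (A : H →L[ℂ] H) :
    ∃ Atilde : H →L[ℂ] H,
      star Atilde = Atilde ∧
      Atilde * Atilde = 1 ∧
      Atilde ∈ Set.centralizer (Set.centralizer {A, star A}) ∧
      ∀ (ξ : H) (ε : ℝ), 0 ≤ ε →
        ‖(A * A - 1) ξ‖ ≤ ε →
        ‖(star A * star A - 1) ξ‖ ≤ ε →
        ‖(A * star A - 1) ξ‖ ≤ ε →
        ‖(star A * A - 1) ξ‖ ≤ ε →
        ‖(A - star A) ξ‖ ≤ ε →
        ‖(A - Atilde) ξ‖ ≤ 2 * ε ∧ ‖(star A - Atilde) ξ‖ ≤ 2 * ε := by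
  set B : H →L[ℂ] H := ↑(ℜ A)
  refine ⟨B.sign, (isSelfAdjoint_sign B).star_eq, sign_mul_sign B, ?_, ?_⟩
  · refine Set.mem_centralizer_iff.mpr fun C hC ↦ ?_
    have hA : Commute A C := hC A (by simp)
    have hA' : Commute (star A) C := hC (star A) (by simp)
    have hA_star : Commute A (star C) := by simpa using hA'.star_star
    exact (commute_sign (hA.realPart_left hA') (hA_star.realPart_left hA.star_star)).symm.eq
  · intro ξ ε _ h₁ h₂ h₃ h₄ h₅
    have h_sign : ‖(B - B.sign) ξ‖ ≤ ε :=
      (norm_sub_sign_apply_le (ℜ A).2 ξ).trans <|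
        (norm_one_sub_realPart_mul_realPart_apply_le A ξ).trans (by linarith)
    have h_A := norm_sub_realPart_apply A ξ
    have h_star := norm_star_sub_realPart_apply A ξ
    simp only [sub_apply] at h_sign h_A h_star h₅ ⊢
    constructor
    · linarith [norm_sub_le_norm_sub_add_norm_sub (A ξ) (B ξ) (B.sign ξ)]
    · linarith [norm_sub_le_norm_sub_add_norm_sub (star A ξ) (B ξ) (B.sign ξ)]
end

section
/- Let A be a *-algebra and let P₀, P₁, P₂, … be a sequence of elements of A that are contractions, i.e. ‖Pₜ‖_A ≤ 1 for all t, and suppose there are constants C > 0, k ∈ ℕ, m ≥ 1, ε ≥ 0 such that, for each n ≥ 0, ‖Pₙ‖ ≤ (1/√2)‖P_{n+1}‖ + (1/√2)·C·((n+1)m)^k·√ε. Then ‖P₀‖ ≤ Λ m^k √ε for any constant Λ ≥ C·Σ_{n=1}^∞ n^k / 2^{n/2}. -/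
/-- the analytic induction/limit argument.  If a sequence of seminorm values
`P n = ‖Pₙ‖` satisfies `0 ≤ P n ≤ 1` and the recursion
`P n ≤ (1/√2) P (n+1) + (1/√2) C ((n+1)m)^k √ε` for all `n`, then
`P 0 ≤ Λ m^k √ε` for any constant `Λ ≥ C Σ_{n=1}^∞ n^k / 2^{n/2}`. -/
theorem seminorm_recursion_limit (P : ℕ → ℝ) (C : ℝ) (k m : ℕ) (ε Λ : ℝ)
    (hC : 0 < C) (hm : 1 ≤ m) (hε : 0 ≤ ε)
    (hP0 : ∀ n, 0 ≤ P n) (hP1 : ∀ n, P n ≤ 1)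
    (hrec : ∀ n : ℕ, P n ≤ (1 / Real.sqrt 2) * P (n + 1) +
      (1 / Real.sqrt 2) * C * (((n : ℝ) + 1) * (m : ℝ)) ^ k * Real.sqrt ε)
    (hΛ : C * (∑' n : ℕ, ((n : ℝ) + 1) ^ k / Real.sqrt 2 ^ (n + 1)) ≤ Λ) :
    P 0 ≤ Λ * (m : ℝ) ^ k * Real.sqrt ε := by
  set a : ℝ := 1 / Real.sqrt 2 with ha
  have hs2 : (1 : ℝ) < Real.sqrt 2 := by
    have := Real.sqrt_lt_sqrt (by norm_num : (0:ℝ) ≤ 1) (by norm_num : (1:ℝ) < 2)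
    simpa using this
  have hs2pos : (0 : ℝ) < Real.sqrt 2 := by linarith
  have ha0 : 0 ≤ a := by positivity
  have ha1 : a < 1 := by
    rw [ha, div_lt_one hs2pos]; linarith
  have hsε : 0 ≤ Real.sqrt ε := Real.sqrt_nonneg ε
  set f : ℕ → ℝ := fun n => ((n : ℝ) + 1) ^ k * a ^ (n + 1) with hf
  have hf0 : ∀ n, 0 ≤ f n := fun n => by positivity
  -- key induction
  have key : ∀ t : ℕ, P 0 ≤ a ^ t * P t +
      C * (m : ℝ) ^ k * Real.sqrt ε * ∑ n ∈ Finset.range t, f n := by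
    intro t
    induction t with
    | zero => simp
    | succ t ih =>
      have h1 := hrec t
      have h2 : a ^ t * P t ≤ a ^ t * (a * P (t + 1) +
          a * C * (((t : ℝ) + 1) * (m : ℝ)) ^ k * Real.sqrt ε) :=
        mul_le_mul_of_nonneg_left h1 (by positivity)
      have h3 : ∑ n ∈ Finset.range (t + 1), f n = (∑ n ∈ Finset.range t, f n) + f t :=
        Finset.sum_range_succ f t
      calc P 0 ≤ a ^ t * P t + C * (m : ℝ) ^ k * Real.sqrt ε * ∑ n ∈ Finset.range t, f n := ih
        _ ≤ a ^ t * (a * P (t + 1) + a * C * (((t : ℝ) + 1) * (m : ℝ)) ^ k * Real.sqrt ε)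
            + C * (m : ℝ) ^ k * Real.sqrt ε * ∑ n ∈ Finset.range t, f n := by linarith
        _ = a ^ (t + 1) * P (t + 1) +
            C * (m : ℝ) ^ k * Real.sqrt ε * ∑ n ∈ Finset.range (t + 1), f n := by
          rw [h3]; simp only [hf, mul_pow]; push_cast; ring
  -- summability
  have hsum : Summable f := by
    have h1 : Summable (fun n : ℕ => (n : ℝ) ^ k * a ^ n) := by
      have : ‖a‖ < 1 := by rwa [Real.norm_eq_abs, abs_of_nonneg ha0]
      exact summable_pow_mul_geometric_of_norm_lt_one k this
    have h2 := h1.comp_injective Nat.succ_injective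
    refine h2.congr fun n => ?_
    simp [hf, Function.comp]
  have hS : ∀ t : ℕ, ∑ n ∈ Finset.range t, f n ≤ ∑' n, f n := fun t =>
    Summable.sum_le_tsum (Finset.range t) (fun n _ => hf0 n) hsum
  -- bound: P 0 ≤ a^t + K for all t, where K = C m^k √ε * tsum f
  set K : ℝ := C * (m : ℝ) ^ k * Real.sqrt ε * ∑' n, f n with hK
  have hbound : ∀ t : ℕ, P 0 ≤ a ^ t + K := by
    intro t
    have h1 := key t
    have h2 : a ^ t * P t ≤ a ^ t := by
      have := hP1 t
      nlinarith [pow_nonneg ha0 t, hP0 t]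
    have h3 : C * (m : ℝ) ^ k * Real.sqrt ε * ∑ n ∈ Finset.range t, f n ≤ K :=
      mul_le_mul_of_nonneg_left (hS t) (by positivity)
    linarith
  have hlim : Filter.Tendsto (fun t : ℕ => a ^ t + K) Filter.atTop (nhds K) := by
    have := tendsto_pow_atTop_nhds_zero_of_lt_one ha0 ha1
    simpa using this.add tendsto_const_nhds
  have hPK : P 0 ≤ K := ge_of_tendsto' hlim fun t => hbound t
  -- rewrite tsum and conclude
  have htsum : (∑' n : ℕ, ((n : ℝ) + 1) ^ k / Real.sqrt 2 ^ (n + 1)) = ∑' n, f n := by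
    refine tsum_congr fun n => ?_
    show ((n : ℝ) + 1) ^ k / Real.sqrt 2 ^ (n + 1) = ((n : ℝ) + 1) ^ k * (1 / Real.sqrt 2) ^ (n + 1)
    rw [div_pow, one_pow, mul_one_div]
  have hfinal : K ≤ Λ * (m : ℝ) ^ k * Real.sqrt ε := by
    have h1 : C * (∑' n, f n) ≤ Λ := by rwa [htsum] at hΛ
    have h2 : 0 ≤ (m : ℝ) ^ k * Real.sqrt ε := by positivity
    calc K = (C * ∑' n, f n) * ((m : ℝ) ^ k * Real.sqrt ε) := by rw [hK]; ring
      _ ≤ Λ * ((m : ℝ) ^ k * Real.sqrt ε) := mul_le_mul_of_nonneg_right h1 h2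
      _ = Λ * (m : ℝ) ^ k * Real.sqrt ε := by ring
  linarith
end
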